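/- Let Δ be a nonzero Laurent polynomial in n variables over Z whose Newton polytope is a point or segment, and suppose V(Δ) ⊂ (C*)^n is a finite union of torsion-translated subtori. Then there exist a nonzero integer c, a product q(t) of cyclotomic polynomials, and an element h of the exponent lattice, such that Δ = c·q(t^h) up to units. -/

import Mathlib

open Pointwise

/-!
STATEMENT 14: Let `Δ` be a nonzero Laurent polynomial in `n` variables over
`ℤ` whose Newton polytope is a point or a segment (i.e. its exponents are
collinear), and suppose `V(Δ) ⊂ (ℂ*)^n` is a finite union of
torsion-translated subtori.  Then there exist a nonzero integer `c`, a product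
`q(t)` of cyclotomic polynomials, and an element `h` of the exponent lattice,
such that `Δ = c·q(t^h)` up to units (i.e. up to a sign and a monomial).
-/

/-- Laurent polynomials `ℤ[ℤ^n]`. -/
abbrev LaurentRing (n : ℕ) : Type := AddMonoidAlgebra ℤ (Fin n → ℤ)

/-- Evaluation at a point of the torus `(ℂ*)^n`. -/
noncomputable def evalT {n : ℕ} (p : LaurentRing n) (ρ : Fin n → ℂˣ) : ℂ :=
  p.coeff.sum fun h a => (a : ℂ) * ∏ i, ((ρ i : ℂ) ^ (h i))

/-- The monomial character `ρ ↦ ρ^h`. -/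
noncomputable def torPow {n : ℕ} (ρ : Fin n → ℂˣ) (h : Fin n → ℤ) : ℂˣ :=
  ∏ i, (ρ i) ^ (h i)

/-- An algebraic subtorus of `(ℂ*)^n`: the common kernel of the monomial
characters indexed by a saturated subgroup of `ℤ^n`. -/
def IsSubtorusSet {n : ℕ} (T : Set (Fin n → ℂˣ)) : Prop :=
  ∃ L : AddSubgroup (Fin n → ℤ),
    (∀ (h : Fin n → ℤ) (k : ℤ), k ≠ 0 → k • h ∈ L → h ∈ L) ∧
    T = {ρ | ∀ h ∈ L, torPow ρ h = 1}

/-- Substitution `t ↦ t^h` of a one-variable polynomial into `ℤ[ℤ^n]`. -/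
noncomputable def substMonomial {n : ℕ} (q : Polynomial ℤ) (h : Fin n → ℤ) :
    LaurentRing n :=
  q.sum fun i a => AddMonoidAlgebra.single (i • h) a

/-!
The exponents of `Δ` lie on a line `g + ℤ v`, so `Δ = t^g₀ · P(t^v)` for a one-variable
integer polynomial `P`. A nonzero complex root `α` of `P` is `x^v` for some `x ∈ V(Δ)`, and
`x = ρ τ` with `ρ` torsion and `τ` in a subtorus `T` cut out by a saturated lattice `L`.
If `v ∈ L` then `α = ρ^v` is a root of unity. Otherwise `ℤ^n / L` is free, so some
`φ : ℤ^n → ℤ` kills `L` but not `v`; the one-parameter subgroup `z ↦ z^φ` lies in `T`, and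
moving `x` along it makes every nonzero complex number a root of `P`, which is absurd.
Hence all nonzero roots of `P` are roots of unity, and dividing out their minimal
polynomials over `ℤ` (cyclotomic polynomials) and powers of `X` leaves a constant.
-/

open Polynomial AddMonoidAlgebra

theorem AddSubgroup.exists_addMonoidHom_ne_zero_of_notMem {M : Type*} [AddCommGroup M]
    [Module.Finite ℤ M] (L : AddSubgroup M) (hL : ∀ (h : M) (k : ℤ), k ≠ 0 → k • h ∈ L → h ∈ L)
    {v : M} (hv : v ∉ L) : ∃ φ : M →+ ℤ, φ v ≠ 0 ∧ ∀ h ∈ L, φ h = 0 := by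
  have : Module.IsTorsionFree ℤ (M ⧸ L) := .of_smul_eq_zero fun k m hkm => by
    induction m using QuotientAddGroup.induction_on with
    | H h =>
      rw [← QuotientAddGroup.mk_zsmul, QuotientAddGroup.eq_zero_iff] at hkm
      rw [QuotientAddGroup.eq_zero_iff]
      exact or_iff_not_imp_left.mpr fun hk => hL h k hk hkm
  have : Module.Finite ℤ (M ⧸ L) :=
    .of_surjective (QuotientAddGroup.mk' L).toIntLinearMap (QuotientAddGroup.mk'_surjective L)
  obtain ⟨f, hf⟩ := Module.Projective.exists_dual_ne_zero ℤ
    (x := (v : M ⧸ L)) (by rwa [Ne, QuotientAddGroup.eq_zero_iff])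
  exact ⟨f.toAddMonoidHom.comp (QuotientAddGroup.mk' L), hf, fun h hh => by
    simp [(QuotientAddGroup.eq_zero_iff h).mpr hh]⟩

lemma Finset.prod_zpow_eq_zpow_sum {ι G : Type*} [CommGroup G] (s : Finset ι) (f : ι → ℤ)
    (a : G) : ∏ i ∈ s, a ^ f i = a ^ ∑ i ∈ s, f i := by
  induction s using Finset.cons_induction <;> simp [zpow_add, *]

lemma Complex.exists_zpow_eq (u : ℂˣ) {k : ℤ} (hk : k ≠ 0) : ∃ z : ℂˣ, z ^ k = u := by
  refine ⟨Units.mk0 (Complex.exp (Complex.log u / k)) (Complex.exp_ne_zero _), Units.ext ?_⟩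
  rw [Units.val_zpow_eq_zpow_val, Units.val_mk0, ← Complex.exp_int_mul,
    mul_div_cancel₀ _ (Int.cast_ne_zero.mpr hk), Complex.exp_log u.ne_zero]

lemma Polynomial.eq_zero_of_forall_aeval_units_eq_zero {P : ℤ[X]}
    (h : ∀ u : ℂˣ, aeval (u : ℂ) P = 0) : P = 0 := by
  refine (Polynomial.map_eq_zero_iff (algebraMap ℤ ℂ).injective_int).mp
    (eq_zero_of_infinite_isRoot _ ((Set.finite_singleton 0).infinite_compl.mono fun α hα => ?_))
  rw [Set.mem_ofPred_eq, IsRoot, eval_map_algebraMap]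
  exact h (Units.mk0 α hα)

def IsCyclotomicProduct (q : ℤ[X]) : Prop :=
  ∃ (m : ℕ) (ks : Fin m → ℕ), (∀ i, 0 < ks i) ∧ q = ∏ i, cyclotomic (ks i) ℤ

lemma isCyclotomicProduct_one : IsCyclotomicProduct 1 :=
  ⟨0, Fin.elim0, fun i => i.elim0, by simp⟩

lemma IsCyclotomicProduct.cyclotomic_mul {d : ℕ} (hd : 0 < d) {q : ℤ[X]}
    (hq : IsCyclotomicProduct q) : IsCyclotomicProduct (cyclotomic d ℤ * q) := by
  obtain ⟨m, ks, hks, rfl⟩ := hq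
  exact ⟨m + 1, Fin.cons d ks, Fin.cases hd hks, by simp [Fin.prod_univ_succ]⟩

lemma cyclotomic_orderOf_dvd {α : ℂ} (hα : IsOfFinOrder α) {P : ℤ[X]} (hP : aeval α P = 0) :
    cyclotomic (orderOf α) ℤ ∣ P := by
  rw [cyclotomic_eq_minpoly (IsPrimitiveRoot.orderOf α) hα.orderOf_pos]
  exact minpoly.isIntegrallyClosed_dvd ((IsPrimitiveRoot.orderOf α).isIntegral hα.orderOf_pos) hP

theorem exists_eq_C_mul_X_pow_mul_of_roots_isOfFinOrder {P : ℤ[X]} (hP : P ≠ 0)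
    (hroots : ∀ α : ℂ, α ≠ 0 → aeval α P = 0 → IsOfFinOrder α) :
    ∃ (c : ℤ) (k : ℕ) (q : ℤ[X]), c ≠ 0 ∧ IsCyclotomicProduct q ∧ P = C c * X ^ k * q := by
  induction hd : P.natDegree using Nat.strong_induction_on generalizing P with
  | _ d ih =>
  by_cases hdeg : P.degree = 0
  · refine ⟨P.coeff 0, 0, 1, fun h => hP ?_, isCyclotomicProduct_one, ?_⟩
    · rw [eq_C_of_degree_eq_zero hdeg, h, C_0]
    · rw [pow_zero, mul_one, mul_one, ← eq_C_of_degree_eq_zero hdeg]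
  obtain ⟨α, hα⟩ := IsAlgClosed.exists_aeval_eq_zero ℂ P hdeg
  have descend : ∀ D Q : ℤ[X], P = D * Q → 0 < D.natDegree →
      ∃ (c : ℤ) (k : ℕ) (q : ℤ[X]), c ≠ 0 ∧ IsCyclotomicProduct q ∧ Q = C c * X ^ k * q := by
    rintro D Q rfl hD
    have hQ : Q ≠ 0 := right_ne_zero_of_mul hP
    refine ih Q.natDegree ?_ hQ (fun β hβ0 hβ => hroots β hβ0 (by rw [map_mul, hβ, mul_zero])) rfl
    rw [← hd, natDegree_mul (left_ne_zero_of_mul hP) hQ]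
    omega
  by_cases hα0 : α = 0
  · obtain ⟨Q, rfl⟩ : X ∣ P := by
      rwa [hα0, ← coeff_zero_eq_aeval_zero', map_eq_zero_iff _ (algebraMap ℤ ℂ).injective_int,
        ← X_dvd_iff] at hα
    obtain ⟨c, k, q, hc, hq, rfl⟩ := descend X _ rfl (by simp)
    exact ⟨c, k + 1, q, hc, hq, by ring⟩
  · have hαfin := hroots α hα0 hα
    obtain ⟨Q, rfl⟩ := cyclotomic_orderOf_dvd hαfin hα
    obtain ⟨c, k, q, hc, hq, rfl⟩ := descend _ _ rfl
      (by rw [natDegree_cyclotomic]; exact Nat.totient_pos.mpr hαfin.orderOf_pos)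
    exact ⟨c, k, _, hc, hq.cyclotomic_mul hαfin.orderOf_pos, by ring⟩

section Torus

variable {n : ℕ}

lemma torPow_mul (x y : Fin n → ℂˣ) (h : Fin n → ℤ) :
    torPow (x * y) h = torPow x h * torPow y h := by
  simp [torPow, mul_zpow, Finset.prod_mul_distrib]

lemma torPow_add (x : Fin n → ℂˣ) (g h : Fin n → ℤ) :
    torPow x (g + h) = torPow x g * torPow x h := by
  simp [torPow, zpow_add, Finset.prod_mul_distrib]

noncomputable def torPowHom (h : Fin n → ℤ) : (Fin n → ℂˣ) →* ℂˣ where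
  toFun x := torPow x h
  map_one' := by simp [torPow]
  map_mul' x y := torPow_mul x y h

lemma exists_torPow_eq {v : Fin n → ℤ} (hv : v ≠ 0) (u : ℂˣ) : ∃ x, torPow x v = u := by
  obtain ⟨j, hj⟩ := Function.ne_iff.mp hv
  obtain ⟨z, hz⟩ := Complex.exists_zpow_eq u hj
  refine ⟨Pi.mulSingle j z, ?_⟩
  rw [torPow, Finset.prod_eq_single j (fun i _ hi => by simp [hi]) (by simp)]
  simpa using hz

def cocharacter (φ : (Fin n → ℤ) →+ ℤ) (z : ℂˣ) : Fin n → ℂˣ :=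
  fun i => z ^ φ (Pi.single i 1)

lemma torPow_cocharacter (φ : (Fin n → ℤ) →+ ℤ) (z : ℂˣ) (h : Fin n → ℤ) :
    torPow (cocharacter φ z) h = z ^ φ h := by
  have hφ : φ h = ∑ i, h i * φ (Pi.single i 1) := by
    conv_lhs => rw [← Finset.univ_sum_single h]
    refine (map_sum φ _ _).trans (Finset.sum_congr rfl fun i _ => ?_)
    rw [← smul_eq_mul, ← map_zsmul, ← Pi.single_smul', smul_eq_mul, mul_one]
  simp only [torPow, cocharacter, ← zpow_mul, Finset.prod_zpow_eq_zpow_sum, hφ, mul_comm]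

namespace IsSubtorusSet

variable {T : Set (Fin n → ℂˣ)}

lemma mul_mem (hT : IsSubtorusSet T) {x y : Fin n → ℂˣ} (hx : x ∈ T) (hy : y ∈ T) :
    x * y ∈ T := by
  obtain ⟨L, -, rfl⟩ := hT
  intro h hh
  rw [torPow_mul, hx h hh, hy h hh, one_mul]

lemma forall_torPow_eq_one_or_exists_cocharacter (hT : IsSubtorusSet T) (v : Fin n → ℤ) :
    (∀ x ∈ T, torPow x v = 1) ∨
      ∃ φ : (Fin n → ℤ) →+ ℤ, φ v ≠ 0 ∧ ∀ z, cocharacter φ z ∈ T := by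
  obtain ⟨L, hL, rfl⟩ := hT
  by_cases hv : v ∈ L
  · exact .inl fun x hx => hx v hv
  · obtain ⟨φ, hφv, hφL⟩ := L.exists_addMonoidHom_ne_zero_of_notMem hL hv
    exact .inr ⟨φ, hφv, fun z h hh => by rw [torPow_cocharacter, hφL h hh, zpow_zero]⟩

end IsSubtorusSet

theorem isOfFinOrder_torPow_of_aeval_eq_zero {P : ℤ[X]} (hP : P ≠ 0) {v : Fin n → ℤ}
    {m : ℕ} {T : Fin m → Set (Fin n → ℂˣ)} {ρ : Fin m → Fin n → ℂˣ}
    (hT : ∀ i, IsSubtorusSet (T i)) (hρ : ∀ i, IsOfFinOrder (ρ i))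
    (hV : {x | aeval (torPow x v : ℂ) P = 0} = ⋃ i, ρ i • T i)
    {x : Fin n → ℂˣ} (hx : aeval (torPow x v : ℂ) P = 0) : IsOfFinOrder (torPow x v) := by
  obtain ⟨i, τ, hτ, rfl⟩ : ∃ i, ∃ τ ∈ T i, ρ i * τ = x := by
    simpa [Set.mem_smul_set] using hV.subset hx
  rcases (hT i).forall_torPow_eq_one_or_exists_cocharacter v with hv | ⟨φ, hφv, hφT⟩
  · rw [torPow_mul, hv τ hτ, mul_one]
    exact (torPowHom v).isOfFinOrder (hρ i)
  · -- the zero set contains `x` times the image of the cocharacter, on which `t^v` is onto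
    refine absurd (eq_zero_of_forall_aeval_units_eq_zero fun u => ?_) hP
    obtain ⟨z, hz⟩ := Complex.exists_zpow_eq ((torPow (ρ i * τ) v)⁻¹ * u) hφv
    have hmem : ρ i * (τ * cocharacter φ z) ∈ ⋃ i, ρ i • T i :=
      Set.mem_iUnion.mpr ⟨i, Set.smul_mem_smul_set ((hT i).mul_mem hτ (hφT z))⟩
    rw [← hV] at hmem
    simpa [← mul_assoc, torPow_mul ((ρ i) * τ), torPow_cocharacter, hz] using hmem

end Torus

section LaurentRing

variable {n : ℕ}

noncomputable def evalHom (x : Fin n → ℂˣ) : LaurentRing n →ₐ[ℤ] ℂ :=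
  lift ℤ ℂ (Fin n → ℤ)
    { toFun h := (torPow x h.toAdd : ℂ)
      map_one' := by simp [torPow]
      map_mul' g h := by simp [torPow_add] }

lemma evalHom_single (x : Fin n → ℂˣ) (g : Fin n → ℤ) (a : ℤ) :
    evalHom x (single g a) = a * (torPow x g : ℂ) := by
  simp [evalHom, lift_single, zsmul_eq_mul]

lemma evalT_eq_evalHom (p : LaurentRing n) (x : Fin n → ℂˣ) : evalT p x = evalHom x p := by
  conv_rhs => rw [← p.sum_coeff_single]
  simp [evalT, Finsupp.sum, map_sum, evalHom_single, torPow, Units.coe_prod]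

lemma evalT_single_mul_aeval (g v : Fin n → ℤ) (P : ℤ[X]) (x : Fin n → ℂˣ) :
    evalT (single g 1 * aeval (single v 1) P) x = torPow x g * aeval (torPow x v : ℂ) P := by
  rw [evalT_eq_evalHom, map_mul, ← aeval_algHom_apply, evalHom_single, evalHom_single]
  simp

lemma aeval_single_monomial (v : Fin n → ℤ) (e : ℕ) (a : ℤ) :
    aeval (single v 1 : LaurentRing n) (monomial e a) = single (e • v) a := by
  rw [aeval_monomial, single_pow, one_pow, Algebra.algebraMap_eq_smul_one, smul_one_mul,
    smul_single', mul_one]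

lemma aeval_single_zero (P : ℤ[X]) :
    aeval (single 0 1 : LaurentRing n) P = algebraMap ℤ (LaurentRing n) (P.eval 1) := by
  rw [← one_def, ← map_one (algebraMap ℤ (LaurentRing n)), aeval_algebraMap_apply,
    coe_aeval_eq_eval]

lemma substMonomial_eq_aeval (q : ℤ[X]) (v : Fin n → ℤ) :
    substMonomial q v = aeval (single v 1) q := by
  conv_rhs => rw [q.as_sum_support]
  simp only [substMonomial, Polynomial.sum_def, map_sum, aeval_single_monomial]

theorem exists_eq_single_mul_aeval_of_support_on_line {Δ : LaurentRing n} {g v : Fin n → ℤ}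
    (h : ∀ g' ∈ Δ.coeff.support, ∃ m : ℤ, g' = g + m • v) :
    ∃ (g₀ : Fin n → ℤ) (P : ℤ[X]), Δ = single g₀ 1 * aeval (single v 1) P := by
  classical
  choose! m hm using h
  -- moving the base point back by `N • v` makes every exponent nonnegative
  set N : ℕ := ∑ g' ∈ Δ.coeff.support, (m g').natAbs
  have hN : ∀ g' ∈ Δ.coeff.support, 0 ≤ m g' + N := fun g' hg' => by
    have := Finset.single_le_sum (f := fun g' => (m g').natAbs) (fun _ _ => Nat.zero_le _) hg'
    omega
  refine ⟨g - (N : ℤ) • v, ∑ g' ∈ Δ.coeff.support, monomial (m g' + N).toNat (Δ.coeff g'), ?_⟩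
  conv_lhs => rw [← Δ.sum_coeff_single]
  rw [map_sum, Finset.mul_sum]
  refine Finset.sum_congr rfl fun g' hg' => ?_
  rw [aeval_single_monomial, single_mul_single, one_mul, ← natCast_zsmul,
    Int.toNat_of_nonneg (hN g' hg')]
  congr 1
  nth_rw 1 [hm g' hg']
  module

end LaurentRing

theorem thin_poly_with_torsion_translated_zero_locus
    (n : ℕ) (Δ : LaurentRing n) (hΔ : Δ ≠ 0)
    -- the Newton polytope of `Δ` is a point or a line segment
    (hthin : ∃ g v : Fin n → ℤ, ∀ g' ∈ Δ.coeff.support, ∃ m : ℤ, g' = g + m • v)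
    -- `V(Δ)` is a finite union of torsion-translated subtori
    (hV : ∃ (m : ℕ) (T : Fin m → Set (Fin n → ℂˣ)) (ρ : Fin m → (Fin n → ℂˣ)),
      (∀ i, IsSubtorusSet (T i)) ∧ (∀ i, IsOfFinOrder (ρ i)) ∧
      {x : Fin n → ℂˣ | evalT Δ x = 0} = ⋃ i, (ρ i) • (T i)) :
    ∃ (c : ℤ) (q : Polynomial ℤ) (h : Fin n → ℤ),
      c ≠ 0 ∧
      (∃ (m : ℕ) (ks : Fin m → ℕ), (∀ i, 0 < ks i) ∧
        q = ∏ i, Polynomial.cyclotomic (ks i) ℤ) ∧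
      ∃ (g : Fin n → ℤ) (ε : ℤ), (ε = 1 ∨ ε = -1) ∧
        Δ = AddMonoidAlgebra.single g ε * (c • substMonomial q h) := by
  obtain ⟨g, v, hline⟩ := hthin
  obtain ⟨g₀, P, rfl⟩ := exists_eq_single_mul_aeval_of_support_on_line hline
  by_cases hv : v = 0
  · subst hv
    rw [aeval_single_zero] at hΔ ⊢
    refine ⟨P.eval 1, 1, 0, fun h => hΔ ?_, isCyclotomicProduct_one, g₀, 1, .inl rfl, ?_⟩
    · rw [h, map_zero, mul_zero]
    · rw [substMonomial_eq_aeval, map_one, Algebra.algebraMap_eq_smul_one]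
  have hP : P ≠ 0 := by rintro rfl; simp at hΔ
  obtain ⟨m, T, ρ, hT, hρ, hZ⟩ := hV
  simp_rw [evalT_single_mul_aeval, mul_eq_zero, Units.ne_zero, false_or] at hZ
  obtain ⟨c, k, q, hc, hq, rfl⟩ :=
    exists_eq_C_mul_X_pow_mul_of_roots_isOfFinOrder hP fun α hα0 hα => by
      obtain ⟨x, hx⟩ := exists_torPow_eq hv (Units.mk0 α hα0)
      have := isOfFinOrder_torPow_of_aeval_eq_zero hP hT hρ hZ (x := x) (by rwa [hx])
      rwa [hx, ← Units.isOfFinOrder_val] at this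
  refine ⟨c, q, v, hc, hq, g₀ + k • v, 1, .inl rfl, ?_⟩
  have hshift : single (g₀ + k • v) (1 : ℤ) = single g₀ 1 * single (k • v) 1 := by
    rw [single_mul_single, one_mul]
  rw [hshift, substMonomial_eq_aeval, mul_assoc, ← smul_eq_C_mul, map_smul, map_mul, aeval_X_pow,
    single_pow, one_pow, mul_smul_comm, mul_smul_comm, mul_assoc]
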